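/- Let S ∈ ℝ^{r×T} (with T ≥ r) be such that S·Sᵀ is invertible, and assume additionally that the matrix S̃ ∈ ℝ^{r×r} formed by the first r columns of S is invertible. Set Π_S := I_T − Sᵀ(S·Sᵀ)⁻¹·S, Γ₂ := S̃⁻¹·S ∈ ℝ^{r×T}, let H̃^LS ∈ ℝ^{p×r} be the matrix of the first r columns of H_y·Π_S, and Γ₁ := H_y·Π_S − H̃^LS·Γ₂ ∈ ℝ^{p×T}. Then for every D̃ ∈ ℝ^{p×r}, the matrix H_d := Γ₁ + D̃·Γ₂ satisfies (H_y − H_d)·Π_S = 0, and moreover the matrix of the first r columns of H_d equals D̃. -/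
import Mathlib


open Matrix

lemma submatrix_mul_right {p m T r : ℕ} (A : Matrix (Fin p) (Fin m) ℝ)
    (B : Matrix (Fin m) (Fin T) ℝ) (f : Fin r → Fin T) :
    (A * B).submatrix id f = A * B.submatrix id f := by
  ext i j
  simp [Matrix.mul_apply]

/-- 'if' direction of Proposition 2, consistency parameterization.
For every choice of free parameters `D̃ ∈ ℝ^{p×r}`, the matrix
`H_d := Γ₁ + D̃ Γ₂` is consistent, `(H_y - H_d) Π_S = 0`, and its first `r`
columns equal `D̃`. -/
theorem consistency_parameterization_if
    (r T p : ℕ) (hT : r ≤ T)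
    (S : Matrix (Fin r) (Fin T) ℝ) (hS : IsUnit (S * Sᵀ))
    (St : Matrix (Fin r) (Fin r) ℝ) (hSt : St = S.submatrix id (Fin.castLE hT))
    (hStInv : IsUnit St)
    (Hy : Matrix (Fin p) (Fin T) ℝ)
    (PiS : Matrix (Fin T) (Fin T) ℝ) (hPiS : PiS = 1 - Sᵀ * (S * Sᵀ)⁻¹ * S)
    (Γ₂ : Matrix (Fin r) (Fin T) ℝ) (hΓ₂ : Γ₂ = St⁻¹ * S)
    (HLS : Matrix (Fin p) (Fin r) ℝ) (hHLS : HLS = (Hy * PiS).submatrix id (Fin.castLE hT))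
    (Γ₁ : Matrix (Fin p) (Fin T) ℝ) (hΓ₁ : Γ₁ = Hy * PiS - HLS * Γ₂)
    (Dt : Matrix (Fin p) (Fin r) ℝ) :
    (Hy - (Γ₁ + Dt * Γ₂)) * PiS = 0 ∧
      (Γ₁ + Dt * Γ₂).submatrix id (Fin.castLE hT) = Dt := by
  have hdet : IsUnit (S * Sᵀ).det := (Matrix.isUnit_iff_isUnit_det _).mp hS
  have hcancel : S * Sᵀ * (S * Sᵀ)⁻¹ = 1 := Matrix.mul_nonsing_inv _ hdet
  have hSPi : S * PiS = 0 := by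
    rw [hPiS, Matrix.mul_sub, Matrix.mul_one]
    rw [show S * (Sᵀ * (S * Sᵀ)⁻¹ * S) = S * Sᵀ * (S * Sᵀ)⁻¹ * S by
      simp [Matrix.mul_assoc]]
    rw [hcancel, Matrix.one_mul, sub_self]
  have hΓ₂Pi : Γ₂ * PiS = 0 := by
    rw [hΓ₂, Matrix.mul_assoc, hSPi, Matrix.mul_zero]
  have hPiIdem : PiS * PiS = PiS := by
    nth_rewrite 1 [hPiS]
    rw [Matrix.sub_mul, Matrix.one_mul, Matrix.mul_assoc, Matrix.mul_assoc, hSPi,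
      Matrix.mul_zero, Matrix.mul_zero, sub_zero]
  have hStdet : IsUnit St.det := (Matrix.isUnit_iff_isUnit_det _).mp hStInv
  have hΓ₂sub : Γ₂.submatrix id (Fin.castLE hT) = 1 := by
    rw [hΓ₂, submatrix_mul_right, ← hSt, Matrix.nonsing_inv_mul _ hStdet]
  constructor
  · rw [hΓ₁]
    have : Hy - (Hy * PiS - HLS * Γ₂ + Dt * Γ₂)
        = Hy - Hy * PiS + (HLS - Dt) * Γ₂ := by
      rw [Matrix.sub_mul]; abel
    rw [this, Matrix.add_mul, Matrix.mul_assoc, hΓ₂Pi, Matrix.mul_zero, add_zero,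
      Matrix.sub_mul, Matrix.mul_assoc, hPiIdem, sub_self]
  · have : (Γ₁ + Dt * Γ₂).submatrix id (Fin.castLE hT)
        = Γ₁.submatrix id (Fin.castLE hT) + (Dt * Γ₂).submatrix id (Fin.castLE hT) := by
      ext i j; simp
    rw [this, submatrix_mul_right Dt Γ₂, hΓ₂sub, Matrix.mul_one, hΓ₁]
    have : (Hy * PiS - HLS * Γ₂).submatrix id (Fin.castLE hT)
        = (Hy * PiS).submatrix id (Fin.castLE hT) - (HLS * Γ₂).submatrix id (Fin.castLE hT) := by
      ext i j; simp
    rw [this, submatrix_mul_right HLS Γ₂, hΓ₂sub, Matrix.mul_one, ← hHLS, sub_self, zero_add]
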